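/- Let μ_1,…,μ_m be nonzero complex numbers. For each positive integer n let a_{1,n},…,a_{m,n} be defined by ∏_{j=1}^m (z − μ_j^n) = z^m + a_{1,n} z^{m−1} + ⋯ + a_{m,n}, and let r_n be the largest nonnegative real root of x^m − Σ_{i=1}^m |a_{i,n}| x^{m−i} (i.e., r_n = λ(F̄_n), the spectral radius of the entrywise absolute value of the companion-form matrix F_n with characteristic polynomial z^m + a_{1,n} z^{m−1} + ⋯ + a_{m,n}). Then lim_{n→∞} (1/n)·log₂ r_n = log₂ max_{1≤i≤m} |μ_i|. (Consequently the exponent threshold β_n = (2/n) log₂ λ(F̄_n) converges to β* = 2 log₂ max_i |μ_i|.) -/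

import Mathlib

/-- `acoef m μ n i` is the coefficient `a_{i,n}` (for `1 ≤ i ≤ m`) defined by
`∏_{j=1}^m (z − μ_j^n) = z^m + a_{1,n} z^{m-1} + ⋯ + a_{m,n}`;
i.e. the coefficient of `z^{m-i}` in the monic polynomial with roots `μ_1^n, …, μ_m^n`. -/
noncomputable def acoef (m : ℕ) (μ : Fin m → ℂ) (n i : ℕ) : ℂ :=
  (∏ j : Fin m, (Polynomial.X - Polynomial.C (μ j ^ n))).coeff (m - i)

/-!
Let `M = max_j ‖μ_j‖`. Since `μ_j^n` with `‖μ_j‖ = M` is a root of the monic polynomial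
`∏ (z - μ_j^n)`, the usual root estimate gives `(M^n)^m ≤ ∑ ‖a_{i,n}‖ (M^n)^{m-i}`, so the
polynomial `x^m - ∑ ‖a_{i,n}‖ x^{m-i}` has a root `≥ M^n` and `r_n ≥ M^n`. Conversely, Vieta
gives `‖a_{i,n}‖ ≤ C(m,i) M^{ni}`, and with this `r_n ≤ 2^m M^n`. Squeezing
`M^n ≤ r_n ≤ 2^m M^n` yields `r_n^{1/n} → M`.
-/

open Polynomial Finset Filter Real Topology

theorem sum_Icc_one_sub_eq_sum_range {M : Type*} [AddCommMonoid M] (f : ℕ → M) (m : ℕ) :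
    ∑ i ∈ Icc 1 m, f (m - i) = ∑ k ∈ range m, f k := by
  refine sum_nbij' (m - ·) (m - ·) ?_ ?_ ?_ ?_ ?_ <;> intro i hi <;>
    simp only [mem_Icc, mem_range] at hi ⊢ <;> omega

theorem Polynomial.Monic.norm_pow_natDegree_le_of_isRoot {K : Type*} [NormedDivisionRing K]
    {p : K[X]} (hp : p.Monic) {z : K} (hz : p.IsRoot z) :
    ‖z‖ ^ p.natDegree ≤ ∑ k ∈ range p.natDegree, ‖p.coeff k‖ * ‖z‖ ^ k := by
  have hsum : z ^ p.natDegree = -∑ k ∈ range p.natDegree, p.coeff k * z ^ k := by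
    have := hz.eq_zero
    rw [eval_eq_sum_range, sum_range_succ, hp.coeff_natDegree, one_mul] at this
    exact eq_neg_of_add_eq_zero_right this
  calc ‖z‖ ^ p.natDegree = ‖∑ k ∈ range p.natDegree, p.coeff k * z ^ k‖ := by
        rw [← norm_pow, hsum, norm_neg]
    _ ≤ ∑ k ∈ range p.natDegree, ‖p.coeff k * z ^ k‖ := norm_sum_le _ _
    _ = ∑ k ∈ range p.natDegree, ‖p.coeff k‖ * ‖z‖ ^ k := by simp only [norm_mul, norm_pow]

section
variable {m : ℕ} (μ : Fin m → ℂ) (n : ℕ)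

noncomputable def powRootsPoly : ℂ[X] := ∏ j : Fin m, (X - C (μ j ^ n))

theorem acoef_eq_coeff_powRootsPoly (i : ℕ) : acoef m μ n i = (powRootsPoly μ n).coeff (m - i) :=
  rfl

theorem monic_powRootsPoly : (powRootsPoly μ n).Monic :=
  monic_prod_X_sub_C _ _

theorem natDegree_powRootsPoly : (powRootsPoly μ n).natDegree = m := by
  rw [powRootsPoly, natDegree_prod_of_monic _ _ fun j _ => monic_X_sub_C (μ j ^ n)]
  simp only [natDegree_X_sub_C, sum_const, card_univ, Fintype.card_fin, smul_eq_mul, mul_one]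

theorem isRoot_powRootsPoly_iff {z : ℂ} : (powRootsPoly μ n).IsRoot z ↔ ∃ j, z = μ j ^ n := by
  simp only [powRootsPoly, IsRoot, eval_prod, eval_sub, eval_X, eval_C, prod_eq_zero_iff,
    mem_univ, true_and, sub_eq_zero]

theorem pow_norm_le_sum_norm_acoef (j : Fin m) :
    (‖μ j‖ ^ n) ^ m ≤ ∑ i ∈ Icc 1 m, ‖acoef m μ n i‖ * (‖μ j‖ ^ n) ^ (m - i) := by
  have := (monic_powRootsPoly μ n).norm_pow_natDegree_le_of_isRoot
    ((isRoot_powRootsPoly_iff μ n).2 ⟨j, rfl⟩)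
  rw [natDegree_powRootsPoly, norm_pow] at this
  simpa only [acoef_eq_coeff_powRootsPoly,
    sum_Icc_one_sub_eq_sum_range (fun k => ‖(powRootsPoly μ n).coeff k‖ * (‖μ j‖ ^ n) ^ k)]

theorem norm_acoef_le {B : ℝ} (hB : ∀ j, ‖μ j‖ ≤ B) {i : ℕ} (hi : i ≤ m) :
    ‖acoef m μ n i‖ ≤ m.choose i * (B ^ n) ^ i := by
  have hroots : ∀ z ∈ ((powRootsPoly μ n).map (RingHom.id ℂ)).roots, ‖z‖ ≤ B ^ n := by
    intro z hz
    rw [Polynomial.map_id, mem_roots (monic_powRootsPoly μ n).ne_zero,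
      isRoot_powRootsPoly_iff] at hz
    obtain ⟨j, rfl⟩ := hz
    rw [norm_pow]
    exact pow_le_pow_left₀ (norm_nonneg _) (hB j) n
  have := coeff_le_of_roots_le (m - i) (monic_powRootsPoly μ n) (IsAlgClosed.splits _) hroots
  rwa [Polynomial.map_id, natDegree_powRootsPoly, Nat.sub_sub_self hi, Nat.choose_symm hi,
    mul_comm, ← acoef_eq_coeff_powRootsPoly] at this
end

section
variable {m : ℕ}

theorem sum_mul_pow_sub_le_pow {c : ℕ → ℝ} (hc : ∀ i, 0 ≤ c i) {x : ℝ} (hx : 1 ≤ x)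
    (hcx : ∑ i ∈ Icc 1 m, c i ≤ x) : ∑ i ∈ Icc 1 m, c i * x ^ (m - i) ≤ x ^ m := by
  refine le_of_mul_le_mul_left ?_ (zero_lt_one.trans_le hx)
  calc x * ∑ i ∈ Icc 1 m, c i * x ^ (m - i) = ∑ i ∈ Icc 1 m, c i * x ^ (m - i + 1) := by
        rw [mul_sum]; exact sum_congr rfl fun i _ => by ring
    _ ≤ ∑ i ∈ Icc 1 m, c i * x ^ m := sum_le_sum fun i hi =>
        mul_le_mul_of_nonneg_left (pow_le_pow_right₀ hx (by grind)) (hc i)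
    _ ≤ x * x ^ m := by rw [← sum_mul]; gcongr

theorem exists_ge_pow_eq_sum_mul_pow {c : ℕ → ℝ} (hc : ∀ i, 0 ≤ c i) {a : ℝ}
    (ha : a ^ m ≤ ∑ i ∈ Icc 1 m, c i * a ^ (m - i)) :
    ∃ t, a ≤ t ∧ t ^ m = ∑ i ∈ Icc 1 m, c i * t ^ (m - i) := by
  set f : ℝ → ℝ := fun x => x ^ m - ∑ i ∈ Icc 1 m, c i * x ^ (m - i)
  have hf : Continuous f := by fun_prop
  set b := max a (max 1 (∑ i ∈ Icc 1 m, c i))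
  have hfb : 0 ≤ f b := sub_nonneg.2 <|
    sum_mul_pow_sub_le_pow hc (le_max_of_le_right (le_max_left _ _))
      (le_max_of_le_right (le_max_right _ _))
  obtain ⟨t, ⟨hat, -⟩, ht⟩ :=
    intermediate_value_Icc (le_max_left a _) hf.continuousOn ⟨sub_nonpos.2 ha, hfb⟩
  exact ⟨t, hat, sub_eq_zero.1 ht⟩

theorem pow_mul_pow_sub_mul_le {B x : ℝ} (hB : 0 ≤ B) (hBx : B ≤ x) {i : ℕ} (hi : i ∈ Icc 1 m) :
    B ^ i * x ^ (m - i) * x ≤ B * x ^ m := by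
  obtain ⟨j, rfl⟩ : ∃ j, i = j + 1 := ⟨i - 1, by grind⟩
  obtain ⟨k, rfl⟩ : ∃ k, m = j + 1 + k := ⟨m - (j + 1), by grind⟩
  have hx : 0 ≤ x := hB.trans hBx
  calc B ^ (j + 1) * x ^ (j + 1 + k - (j + 1)) * x = B * (B ^ j * x ^ (k + 1)) := by
        rw [Nat.add_sub_cancel_left]; ring
    _ ≤ B * (x ^ j * x ^ (k + 1)) := by gcongr
    _ = B * x ^ (j + 1 + k) := by ring

theorem le_two_pow_mul_of_pow_le_sum_choose {B x : ℝ} (hB : 0 ≤ B)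
    (h : x ^ m ≤ ∑ i ∈ Icc 1 m, m.choose i * B ^ i * x ^ (m - i)) : x ≤ 2 ^ m * B := by
  rcases le_or_gt x B with hxB | hBx
  · exact hxB.trans (le_mul_of_one_le_left hB (one_le_pow₀ one_le_two))
  have hx : 0 < x := hB.trans_lt hBx
  have hchoose : ∑ i ∈ Icc 1 m, (m.choose i : ℝ) ≤ 2 ^ m := by
    calc ∑ i ∈ Icc 1 m, (m.choose i : ℝ) ≤ ∑ i ∈ range (m + 1), (m.choose i : ℝ) :=
          sum_le_sum_of_subset_of_nonneg (fun i hi => by grind)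
            fun _ _ _ => by positivity
      _ = 2 ^ m := by exact_mod_cast Nat.sum_range_choose m
  refine le_of_mul_le_mul_left ?_ (pow_pos hx m)
  calc x ^ m * x ≤ (∑ i ∈ Icc 1 m, m.choose i * B ^ i * x ^ (m - i)) * x := by gcongr
    _ = ∑ i ∈ Icc 1 m, (m.choose i : ℝ) * (B ^ i * x ^ (m - i) * x) := by
        rw [sum_mul]; exact sum_congr rfl fun _ _ => by ring
    _ ≤ ∑ i ∈ Icc 1 m, (m.choose i : ℝ) * (B * x ^ m) := sum_le_sum fun i hi =>
        mul_le_mul_of_nonneg_left (pow_mul_pow_sub_mul_le hB hBx.le hi) (by positivity)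
    _ ≤ 2 ^ m * (B * x ^ m) := by rw [← sum_mul]; gcongr
    _ = x ^ m * (2 ^ m * B) := by ring

end

theorem tendsto_log_div_of_pow_le_of_le_mul_pow {r : ℕ → ℝ} {M C : ℝ} (hM : 0 < M)
    (hlow : ∀ n, M ^ n ≤ r n) (hup : ∀ n, r n ≤ C * M ^ n) :
    Tendsto (fun n => log (r n) / n) atTop (𝓝 (log M)) := by
  have hC : 0 < C := pos_of_mul_pos_left ((pow_pos hM 0).trans_le ((hlow 0).trans (hup 0)))
    (pow_pos hM 0).le
  have hupper : Tendsto (fun n : ℕ => log M + log C / n) atTop (𝓝 (log M)) := by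
    simpa using tendsto_const_nhds.add (tendsto_const_div_atTop_nhds_zero_nat (log C))
  refine tendsto_of_tendsto_of_tendsto_of_le_of_le' tendsto_const_nhds hupper ?_ ?_ <;>
    filter_upwards [eventually_gt_atTop 0] with n hn <;>
    have hn' : (0 : ℝ) < n := Nat.cast_pos.2 hn
  · rw [le_div_iff₀ hn', mul_comm, ← log_pow]
    exact log_le_log (pow_pos hM n) (hlow n)
  · rw [div_le_iff₀ hn', add_mul, div_mul_cancel₀ _ hn'.ne', mul_comm, ← log_pow, add_comm,
      ← log_mul hC.ne' (pow_pos hM n).ne']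
    exact log_le_log ((pow_pos hM n).trans_le (hlow n)) (hup n)

/-- Let `r_n` be the largest nonnegative real root of
`x^m − Σ_{i=1}^m |a_{i,n}| x^{m-i}` (equivalently `r_n = λ(F̄_n)`). Then
`(1/n) log₂ r_n → log₂ max_i |μ_i|`; consequently the exponent threshold
`β_n = (2/n) log₂ λ(F̄_n)` converges to `β* = 2 log₂ max_i |μ_i|`. -/
theorem exponent_threshold_tendsto (m : ℕ) (hm : 1 ≤ m) (μ : Fin m → ℂ)
    (hμ0 : ∀ i, μ i ≠ 0)
    (r : ℕ → ℝ)
    (hr_root : ∀ n, (r n) ^ m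
      = ∑ i ∈ Finset.Icc 1 m, ‖acoef m μ n i‖ * (r n) ^ (m - i))
    (hr_max : ∀ n, ∀ s : ℝ, 0 ≤ s →
      s ^ m = ∑ i ∈ Finset.Icc 1 m, ‖acoef m μ n i‖ * s ^ (m - i) →
      s ≤ r n) :
    Filter.Tendsto (fun n : ℕ => (1 / (n : ℝ)) * Real.logb 2 (r n))
      Filter.atTop
      (nhds (Real.logb 2 (Finset.univ.sup'
        (Finset.univ_nonempty_iff.mpr (Fin.pos_iff_nonempty.mp (by omega)))
        (fun i : Fin m => ‖μ i‖)))) := by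
  set M := Finset.univ.sup' _ fun i : Fin m => ‖μ i‖
  obtain ⟨j, -, hj⟩ : ∃ j ∈ univ, M = ‖μ j‖ := exists_mem_eq_sup' _ _
  have hM : 0 < M := hj ▸ norm_pos_iff.2 (hμ0 j)
  have hlow (n : ℕ) : M ^ n ≤ r n := by
    obtain ⟨t, hMt, ht⟩ := exists_ge_pow_eq_sum_mul_pow (a := M ^ n)
      (fun i => norm_nonneg (acoef m μ n i)) (by rw [hj]; exact pow_norm_le_sum_norm_acoef μ n j)
    exact hMt.trans (hr_max n t ((pow_pos hM n).le.trans hMt) ht)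
  have hup (n : ℕ) : r n ≤ 2 ^ m * M ^ n := by
    refine le_two_pow_mul_of_pow_le_sum_choose (pow_pos hM n).le ((hr_root n).trans_le ?_)
    exact sum_le_sum fun i hi => mul_le_mul_of_nonneg_right
      (norm_acoef_le μ n (fun k => le_sup' (fun i => ‖μ i‖) (mem_univ k)) (mem_Icc.1 hi).2)
      (pow_nonneg ((pow_pos hM n).le.trans (hlow n)) _)
  refine ((tendsto_log_div_of_pow_le_of_le_mul_pow hM hlow hup).div_const (log 2)).congr
    fun n => ?_
  rw [logb]
  ring
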